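/- arXiv:2106.15760 — 2 statements merged into one kernel-verified Lean document; each statement's English description precedes it below -/
import Mathlib

section
/- The map DT ↦ C(DT) that sends a binary discourse tree over [0,n] to its generalized splitting-decision set is injective: two binary discourse trees over [0,n] with the same decision set are equal. Moreover, the EDU segmentation is recoverable from the decision set alone: the leaves (EDUs) of DT are exactly the spans (i,j) such that (i,j,j) ∈ C(DT). (This makes precise Proposition 2: a binary discourse tree of a text of n tokens is faithfully represented by splitting decisions (i,j) → k with i < k ≤ j, where k = j marks the end of splitting, i.e., an EDU.) -/
/-- A binary discourse tree over the boundary interval `[i, j]`: leaves are labeled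
with arbitrary spans `(i, j)` with `i < j` (the EDUs), and an internal node over
span `(i, j)` splits at some `k` with `i < k < j` into children over `(i, k)` and
`(k, j)`.  A binary discourse tree over `[0, n]` is a term of type `DTree 0 n`. -/
inductive DTree : ℕ → ℕ → Type where
  | leaf : (i j : ℕ) → i < j → DTree i j
  | node : (i k j : ℕ) → i < k → k < j → DTree i k → DTree k j → DTree i j

/-- The generalized splitting-decision set `C(DT)`: triples `(i, j, k)` with
`i < k < j` for internal nodes splitting span `(i, j)` at `k`, together with a
triple `(i, j, j)` for every leaf labeled `(i, j)`. -/
def DTree.splits : {i j : ℕ} → DTree i j → Finset (ℕ × ℕ × ℕ)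
  | _, _, .leaf i j _ => {(i, j, j)}
  | _, _, .node i k j _ _ l r => insert (i, j, k) (l.splits ∪ r.splits)

/-- The set of leaf spans (EDUs) of a binary discourse tree. -/
def DTree.edus : {i j : ℕ} → DTree i j → Finset (ℕ × ℕ)
  | _, _, .leaf i j _ => {(i, j)}
  | _, _, .node _ _ _ _ _ l r => l.edus ∪ r.edus

/-!
A node over `(i, j)` contributes the only triple of `C(DT)` whose span is `(i, j)`, so the decision
set determines the root's split point `k`. The triples coming from the left subtree are then exactly
those whose span ends at or before `k`, and those from the right subtree exactly those whose span
starts at or after `k`; hence the decision set also determines the decision sets of both subtrees,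
and injectivity follows by induction. A triple `(i, j, j)` can only come from a leaf, since an
internal node splits its span strictly inside.
-/

namespace DTree

def rootSplit : {i j : ℕ} → DTree i j → ℕ
  | _, _, .leaf _ j _ => j
  | _, _, .node _ k _ _ _ _ _ => k

theorem span_bounds_of_mem_splits {i j a b c : ℕ} {T : DTree i j} (h : (a, b, c) ∈ T.splits) :
    i ≤ a ∧ a < b ∧ b ≤ j := by
  induction T with
  | leaf => simp only [splits, Finset.mem_singleton, Prod.mk.injEq] at h; omega
  | node i k j hik hkj l r ihl ihr =>
    simp only [splits, Finset.mem_insert, Finset.mem_union, Prod.mk.injEq] at h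
    rcases h with h | h | h
    · omega
    · have := ihl h; omega
    · have := ihr h; omega

theorem mem_splits_self_iff {i j c : ℕ} (T : DTree i j) :
    (i, j, c) ∈ T.splits ↔ c = T.rootSplit := by
  cases T with
  | leaf => simp [splits, rootSplit, eq_comm]
  | node i k j hik hkj l r =>
    have hl : (i, j, c) ∉ l.splits := fun h => by have := span_bounds_of_mem_splits h; omega
    have hr : (i, j, c) ∉ r.splits := fun h => by have := span_bounds_of_mem_splits h; omega
    simp [splits, rootSplit, hl, hr]

theorem splits_node_filter_left {i k j : ℕ} (hik : i < k) (hkj : k < j) (l : DTree i k)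
    (r : DTree k j) : (node i k j hik hkj l r).splits.filter (·.2.1 ≤ k) = l.splits := by
  ext ⟨a, b, c⟩
  simp only [splits, Finset.mem_filter, Finset.mem_insert, Finset.mem_union, Prod.mk.injEq]
  constructor
  · rintro ⟨h | h | h, hb⟩
    · omega
    · exact h
    · have := span_bounds_of_mem_splits h; omega
  · intro h
    exact ⟨Or.inr (Or.inl h), (span_bounds_of_mem_splits h).2.2⟩

theorem splits_node_filter_right {i k j : ℕ} (hik : i < k) (hkj : k < j) (l : DTree i k)
    (r : DTree k j) : (node i k j hik hkj l r).splits.filter (k ≤ ·.1) = r.splits := by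
  ext ⟨a, b, c⟩
  simp only [splits, Finset.mem_filter, Finset.mem_insert, Finset.mem_union, Prod.mk.injEq]
  constructor
  · rintro ⟨h | h | h, ha⟩
    · omega
    · have := span_bounds_of_mem_splits h; omega
    · exact h
  · intro h
    exact ⟨Or.inr (Or.inr h), (span_bounds_of_mem_splits h).1⟩

theorem rootSplit_eq_of_splits_eq {i j : ℕ} {T₁ T₂ : DTree i j} (h : T₁.splits = T₂.splits) :
    T₁.rootSplit = T₂.rootSplit := by
  rw [← mem_splits_self_iff, ← h, mem_splits_self_iff]

theorem splits_injective {i j : ℕ} : Function.Injective (splits : DTree i j → _) := by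
  intro T₁ T₂ h
  induction T₁ with
  | leaf =>
    cases T₂ with
    | leaf => rfl
    | node => have := rootSplit_eq_of_splits_eq h; simp only [rootSplit] at this; omega
  | node i k j hik hkj l r ihl ihr =>
    cases T₂ with
    | leaf => have := rootSplit_eq_of_splits_eq h; simp only [rootSplit] at this; omega
    | node _ k' _ _ _ l' r' =>
      obtain rfl : k = k' := rootSplit_eq_of_splits_eq h
      obtain rfl : l = l' :=
        ihl (by rw [← splits_node_filter_left hik hkj l r, h, splits_node_filter_left])
      obtain rfl : r = r' :=
        ihr (by rw [← splits_node_filter_right hik hkj l r, h, splits_node_filter_right])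
      rfl

theorem mem_edus_iff_mem_splits {i' j' : ℕ} (T : DTree i' j') (i j : ℕ) :
    (i, j) ∈ T.edus ↔ (i, j, j) ∈ T.splits := by
  induction T with
  | leaf => simp [edus, splits]
  | node a k b hak hkb l r ihl ihr =>
    simp only [edus, splits, Finset.mem_union, Finset.mem_insert, Prod.mk.injEq, ihl, ihr]
    exact (or_iff_right (by omega)).symm

end DTree

theorem dtree_splits_injective_and_edus_general (n : ℕ) :
    (∀ T₁ T₂ : DTree 0 n, T₁.splits = T₂.splits → T₁ = T₂) ∧
    (∀ T : DTree 0 n, ∀ i j : ℕ, (i, j) ∈ T.edus ↔ (i, j, j) ∈ T.splits) := by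
  exact ⟨fun _ _ h => DTree.splits_injective h, DTree.mem_edus_iff_mem_splits⟩

/-- The map `DT ↦ C(DT)` sending a binary discourse tree over
`[0, n]` to its generalized splitting-decision set is injective, and the EDU
segmentation is recoverable from the decision set alone: the leaves (EDUs) of `DT`
are exactly the spans `(i, j)` such that `(i, j, j) ∈ C(DT)`. -/
theorem dtree_splits_injective_and_edus (n : ℕ) (hn : 1 ≤ n) :
    (∀ T₁ T₂ : DTree 0 n, T₁.splits = T₂.splits → T₁ = T₂) ∧
    (∀ T : DTree 0 n, ∀ i j : ℕ, (i, j) ∈ T.edus ↔ (i, j, j) ∈ T.splits) :=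
  dtree_splits_injective_and_edus_general n
end

section
/- In a binary discourse tree over [0,n] whose EDUs partition [0,n], the proper split points coincide with the interior EDU boundaries: the set {k : (i,j,k) ∈ C(DT) with i < k < j} equals the set of endpoints of EDUs other than 0 and n, and for each such interior EDU boundary k there is exactly one proper splitting decision in C(DT) that splits at k. -/
/-!
Every EDU boundary of a tree over `[i, j]` is either `i`, `j` or the split point of an
internal node, and every split point of a subtree lies strictly inside its span. At a node
splitting `(i, j)` at `m`, proper splits of the left subtree therefore happen left of `m`
and those of the right subtree right of `m`, so a split point determines its node.
-/

namespace DTree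

variable {i j : ℕ}

def IsSplitPoint (T : DTree i j) (k : ℕ) : Prop :=
  ∃ a b, (a, b, k) ∈ T.splits ∧ a < k ∧ k < b

def IsEduBoundary (T : DTree i j) (k : ℕ) : Prop :=
  ∃ a b, (a, b) ∈ T.edus ∧ (k = a ∨ k = b)

lemma not_isSplitPoint_leaf {h : i < j} {k : ℕ} : ¬ (leaf i j h).IsSplitPoint k := by
  rintro ⟨a, b, hmem, -, hkb⟩
  simp only [splits, Finset.mem_singleton, Prod.mk.injEq] at hmem
  omega

lemma isSplitPoint_node {m k : ℕ} {h₁ : i < m} {h₂ : m < j} {l : DTree i m} {r : DTree m j} :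
    (node i m j h₁ h₂ l r).IsSplitPoint k ↔ k = m ∨ l.IsSplitPoint k ∨ r.IsSplitPoint k := by
  simp only [IsSplitPoint, splits, Finset.mem_insert, Finset.mem_union, Prod.mk.injEq]
  constructor
  · rintro ⟨a, b, ⟨-, -, rfl⟩ | hl | hr, hak, hkb⟩
    exacts [Or.inl rfl, Or.inr (Or.inl ⟨a, b, hl, hak, hkb⟩), Or.inr (Or.inr ⟨a, b, hr, hak, hkb⟩)]
  · rintro (rfl | ⟨a, b, hl, hak, hkb⟩ | ⟨a, b, hr, hak, hkb⟩)
    exacts [⟨i, j, Or.inl ⟨rfl, rfl, rfl⟩, h₁, h₂⟩, ⟨a, b, Or.inr (Or.inl hl), hak, hkb⟩,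
      ⟨a, b, Or.inr (Or.inr hr), hak, hkb⟩]

lemma isEduBoundary_leaf {h : i < j} {k : ℕ} :
    (leaf i j h).IsEduBoundary k ↔ k = i ∨ k = j := by
  simp [IsEduBoundary, edus]

lemma isEduBoundary_node {m k : ℕ} {h₁ : i < m} {h₂ : m < j} {l : DTree i m} {r : DTree m j} :
    (node i m j h₁ h₂ l r).IsEduBoundary k ↔ l.IsEduBoundary k ∨ r.IsEduBoundary k := by
  simp only [IsEduBoundary, edus, Finset.mem_union, or_and_right, exists_or]

lemma IsSplitPoint.mem_Ioo {T : DTree i j} {k : ℕ} (hk : T.IsSplitPoint k) : i < k ∧ k < j := by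
  induction T with
  | leaf => exact absurd hk not_isSplitPoint_leaf
  | node i m j h₁ h₂ l r ihl ihr =>
    rcases isSplitPoint_node.mp hk with rfl | hl | hr
    · exact ⟨h₁, h₂⟩
    · exact ⟨(ihl hl).1, (ihl hl).2.trans h₂⟩
    · exact ⟨h₁.trans (ihr hr).1, (ihr hr).2⟩

lemma isEduBoundary_iff {T : DTree i j} {k : ℕ} :
    T.IsEduBoundary k ↔ k = i ∨ k = j ∨ T.IsSplitPoint k := by
  induction T with
  | leaf => simp only [isEduBoundary_leaf, not_isSplitPoint_leaf, or_false]
  | node i m j h₁ h₂ l r ihl ihr =>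
    rw [isEduBoundary_node, isSplitPoint_node, ihl, ihr]
    tauto

lemma isSplitPoint_iff {T : DTree i j} {k : ℕ} :
    T.IsSplitPoint k ↔ k ≠ i ∧ k ≠ j ∧ T.IsEduBoundary k := by
  rw [isEduBoundary_iff]
  constructor
  · intro hk
    obtain ⟨hik, hkj⟩ := hk.mem_Ioo
    exact ⟨hik.ne', hkj.ne, Or.inr (Or.inr hk)⟩
  · rintro ⟨hki, hkj, rfl | rfl | hk⟩
    exacts [absurd rfl hki, absurd rfl hkj, hk]

lemma mem_splits_node_cases {m a b k : ℕ} {h₁ : i < m} {h₂ : m < j} {l : DTree i m}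
    {r : DTree m j} (hmem : (a, b, k) ∈ (node i m j h₁ h₂ l r).splits) (hak : a < k)
    (hkb : k < b) :
    (a = i ∧ b = j ∧ k = m) ∨ ((a, b, k) ∈ l.splits ∧ k < m) ∨
      ((a, b, k) ∈ r.splits ∧ m < k) := by
  simp only [splits, Finset.mem_insert, Finset.mem_union, Prod.mk.injEq] at hmem
  rcases hmem with hroot | hl | hr
  · exact Or.inl hroot
  · exact Or.inr (Or.inl ⟨hl, (IsSplitPoint.mem_Ioo ⟨a, b, hl, hak, hkb⟩).2⟩)
  · exact Or.inr (Or.inr ⟨hr, (IsSplitPoint.mem_Ioo ⟨a, b, hr, hak, hkb⟩).1⟩)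

lemma eq_of_mem_splits {T : DTree i j} {a b a' b' k : ℕ}
    (h : (a, b, k) ∈ T.splits) (hak : a < k) (hkb : k < b)
    (h' : (a', b', k) ∈ T.splits) (hak' : a' < k) (hkb' : k < b') : a = a' ∧ b = b' := by
  induction T with
  | leaf => exact absurd ⟨a, b, h, hak, hkb⟩ not_isSplitPoint_leaf
  | node i m j h₁ h₂ l r ihl ihr =>
    rcases mem_splits_node_cases h hak hkb with ⟨ha, hb, hkm⟩ | ⟨hl, hkm⟩ | ⟨hr, hmk⟩ <;>
      rcases mem_splits_node_cases h' hak' hkb' with ⟨ha', hb', hkm'⟩ | ⟨hl', hkm'⟩ | ⟨hr', hmk'⟩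
    all_goals first
      | exact ⟨ha.trans ha'.symm, hb.trans hb'.symm⟩
      | exact ihl hl hl'
      | exact ihr hr hr'
      | omega

end DTree

theorem dtree_proper_splits_eq_interior_boundaries_general (n : ℕ)
    (T : DTree 0 n) :
    (∀ k : ℕ,
      (∃ i j : ℕ, (i, j, k) ∈ T.splits ∧ i < k ∧ k < j) ↔
      (k ≠ 0 ∧ k ≠ n ∧ ∃ a b : ℕ, (a, b) ∈ T.edus ∧ (k = a ∨ k = b))) ∧
    (∀ k i j i' j' : ℕ,
      (i, j, k) ∈ T.splits → i < k → k < j →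
      (i', j', k) ∈ T.splits → i' < k → k < j' →
      i = i' ∧ j = j') :=
  ⟨fun _ => DTree.isSplitPoint_iff, fun _ _ _ _ _ => DTree.eq_of_mem_splits⟩

/-- In a binary discourse tree over `[0, n]` (whose EDUs partition
`[0, n]`), the proper split points coincide with the interior EDU boundaries: `k`
is the split point of some proper splitting decision `(i, j, k)` (with `i < k < j`)
of `C(DT)` if and only if `k` is an endpoint of some EDU other than `0` and `n`;
moreover, for each such interior EDU boundary `k` there is exactly one proper
splitting decision in `C(DT)` that splits at `k`. -/
theorem dtree_proper_splits_eq_interior_boundaries (n : ℕ) (hn : 1 ≤ n)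
    (T : DTree 0 n) :
    (∀ k : ℕ,
      (∃ i j : ℕ, (i, j, k) ∈ T.splits ∧ i < k ∧ k < j) ↔
      (k ≠ 0 ∧ k ≠ n ∧ ∃ a b : ℕ, (a, b) ∈ T.edus ∧ (k = a ∨ k = b))) ∧
    (∀ k i j i' j' : ℕ,
      (i, j, k) ∈ T.splits → i < k → k < j →
      (i', j', k) ∈ T.splits → i' < k → k < j' →
      i = i' ∧ j = j') :=
  dtree_proper_splits_eq_interior_boundaries_general n T
end
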